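/- Let G be a connected graph on n vertices. Then Γρ(G) = n − 1 if and only if all of the following hold: (i) i(G) = 2; (ii) diam(G) ≤ 4; (iii) if rad(G) = 3, then there exist a maximal independent set {x, y} of cardinality 2 with d_G(x,y) = 3 and a vertex w ∈ N(x) such that d_G(w,z) ≤ 2 for every z ∈ N(y); (iv) if rad(G) = 2 and diam(G) = 4, then there exist a maximal independent set A of cardinality 2 and two distinct vertices w, z ∉ A such that ecc(w) = 2 (w is a central vertex) and ecc(z) ≤ 3 (z is a non-diametrical vertex). -/

import Mathlib

open SimpleGraph

/-- A packing `k`-coloring of `G`: colors in `{1,…,k}` and vertices of equal color `i`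
are at distance greater than `i` (vertices in different components are unconstrained). -/
def IsPackingColoring {V : Type*} (G : SimpleGraph V) (k : ℕ) (c : V → ℕ) : Prop :=
  (∀ v, 1 ≤ c v ∧ c v ≤ k) ∧
  ∀ u v, u ≠ v → c u = c v → G.Reachable u v → c u < G.dist u v

/-- A greedy packing `k`-coloring: a packing `k`-coloring that uses color `k` and in which
every vertex of color `i ≥ 2` has, for every `j < i`, a vertex of color `j`
at distance at most `j`. -/
def IsGreedyPackingColoring {V : Type*} (G : SimpleGraph V) (k : ℕ) (c : V → ℕ) : Prop :=
  IsPackingColoring G k c ∧ (∃ v, c v = k) ∧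
  ∀ v, ∀ j, 1 ≤ j → j < c v → ∃ u, c u = j ∧ G.Reachable u v ∧ G.dist u v ≤ j

/-- The Grundy packing chromatic number: the largest `k` admitting a greedy packing
`k`-coloring. -/
noncomputable def grundyPackingChromaticNumber {V : Type*} (G : SimpleGraph V) : ℕ :=
  sSup {k | ∃ c : V → ℕ, IsGreedyPackingColoring G k c}

/-- The packing chromatic number: the smallest `k` admitting a packing `k`-coloring. -/
noncomputable def packingChromaticNumber {V : Type*} (G : SimpleGraph V) : ℕ :=
  sInf {k | ∃ c : V → ℕ, IsPackingColoring G k c}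

/-- `s` is an independent set of `G`. -/
def IsIndepFinset {V : Type*} (G : SimpleGraph V) (s : Finset V) : Prop :=
  ∀ u ∈ s, ∀ v ∈ s, ¬ G.Adj u v

/-- `s` is a maximal independent set of `G`. -/
def IsMaxIndepFinset {V : Type*} (G : SimpleGraph V) (s : Finset V) : Prop :=
  IsIndepFinset G s ∧ ∀ t : Finset V, IsIndepFinset G t → s ⊆ t → s = t

/-- The independent domination number `i(G)`:
the minimum cardinality of a maximal independent set. -/
noncomputable def indepDomNum {V : Type*} (G : SimpleGraph V) [Fintype V] : ℕ :=
  sInf {n | ∃ s : Finset V, IsMaxIndepFinset G s ∧ s.card = n}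

/-- The graph `G^ℓ`: same vertices, `u ∼ v` iff `u ≠ v` and `d_G(u,v) ≤ ℓ`. -/
def distPow {V : Type*} (G : SimpleGraph V) (ℓ : ℕ) : SimpleGraph V where
  Adj u v := u ≠ v ∧ G.dist u v ≤ ℓ
  symm := by
    constructor
    rintro u v ⟨h1, h2⟩
    exact ⟨h1.symm, by rwa [SimpleGraph.dist_comm]⟩
  loopless := by constructor; rintro v ⟨h, _⟩; exact h rfl

/-- The graph `G(k)`: vertex set is `k` disjoint copies of `V(G)`, the copy `i : Fin k`
playing the role of `G^(i+1)`; the `k` copies of each vertex form a clique, and within the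
`i`-th copy two distinct vertices are adjacent iff their distance in `G` is at most `i+1`. -/
def levelGraph {V : Type*} (G : SimpleGraph V) (k : ℕ) : SimpleGraph (V × Fin k) where
  Adj p q := (p.1 = q.1 ∧ p.2 ≠ q.2) ∨
    (p.1 ≠ q.1 ∧ p.2 = q.2 ∧ G.dist p.1 q.1 ≤ (p.2 : ℕ) + 1)
  symm := by
    constructor
    rintro p q (⟨h1, h2⟩ | ⟨h1, h2, h3⟩)
    · exact Or.inl ⟨h1.symm, h2.symm⟩
    · refine Or.inr ⟨h1.symm, h2.symm, ?_⟩
      rw [SimpleGraph.dist_comm, ← h2]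
      exact h3
  loopless := by constructor; rintro p (⟨_, h⟩ | ⟨h, _, _⟩) <;> exact h rfl

/-- `A` is a maximal independent set of the subgraph of `H` induced on `S`. -/
def IsMaxIndepSetOn {V : Type*} (H : SimpleGraph V) (S : Set V) (A : Set V) : Prop :=
  A ⊆ S ∧ (∀ u ∈ A, ∀ v ∈ A, ¬ H.Adj u v) ∧
  ∀ B : Set V, B ⊆ S → (∀ u ∈ B, ∀ v ∈ B, ¬ H.Adj u v) → A ⊆ B → A = B

/-- The eccentricity of a vertex. -/
noncomputable def eccent {V : Type*} (G : SimpleGraph V) [Fintype V] (v : V) : ℕ :=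
  Finset.univ.sup (fun u => G.dist v u)

/-- The radius of a graph. -/
noncomputable def graphRadius {V : Type*} (G : SimpleGraph V) [Fintype V] : ℕ :=
  sInf (Set.range (eccent G))

/-- The diameter of a graph. -/
noncomputable def graphDiam {V : Type*} (G : SimpleGraph V) [Fintype V] : ℕ :=
  Finset.univ.sup (eccent G)

/-- The diametrical graph `D(G)`: `x ∼ y` iff `d_G(x,y) = diam(G)`. -/
noncomputable def diamGraph {V : Type*} (G : SimpleGraph V) [Fintype V] : SimpleGraph V where
  Adj u v := u ≠ v ∧ G.dist u v = graphDiam G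
  symm := by
    constructor
    rintro u v ⟨h1, h2⟩
    exact ⟨h1.symm, by rwa [SimpleGraph.dist_comm]⟩
  loopless := by constructor; rintro v ⟨h, _⟩; exact h rfl

/-- `Q` is a clique of the subgraph of `H` induced on `S`. -/
def IsCliqueFinsetOn {V : Type*} (H : SimpleGraph V) (S : Set V) (Q : Finset V) : Prop :=
  ↑Q ⊆ S ∧ ∀ u ∈ Q, ∀ v ∈ Q, u ≠ v → H.Adj u v

/-- `Q` is a maximal clique of the subgraph of `H` induced on `S`. -/
def IsMaxCliqueFinsetOn {V : Type*} (H : SimpleGraph V) (S : Set V) (Q : Finset V) : Prop :=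
  IsCliqueFinsetOn H S Q ∧ ∀ R : Finset V, IsCliqueFinsetOn H S R → Q ⊆ R → Q = R

/-- The join `G ∨ H` of two graphs. -/
def joinGraph {V W : Type*} (G : SimpleGraph V) (H : SimpleGraph W) :
    SimpleGraph (V ⊕ W) where
  Adj p q := match p, q with
    | .inl u, .inl v => G.Adj u v
    | .inr u, .inr v => H.Adj u v
    | .inl _, .inr _ => True
    | .inr _, .inl _ => True
  symm := by
    constructor
    rintro (u | u) (v | v) h
    · exact G.adj_symm h
    · trivial
    · trivial
    · exact H.adj_symm h
  loopless := by
    constructor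
    rintro (u | u) h
    · exact G.irrefl h
    · exact H.irrefl h

/-- `K_{n,n}` minus a perfect matching: parts `{u_i}` and `{v_i}`, with `u_i ∼ v_j` iff
`i ≠ j`. -/
def completeBipartiteMinusMatching (n : ℕ) : SimpleGraph (Fin n ⊕ Fin n) where
  Adj p q := match p, q with
    | .inl i, .inr j => i ≠ j
    | .inr i, .inl j => i ≠ j
    | _, _ => False
  symm := by constructor; rintro (i | i) (j | j) h <;> first | exact h.symm | exact h
  loopless := by constructor; rintro (i | i) h <;> exact h

/-!
A greedy packing colouring uses every colour `1, …, k`, so `Γρ(G) ≤ |V|`, with equality exactly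
when some vertex is universal (it carries colour `1`, and every other vertex needs it as a
neighbour). Otherwise a greedy packing `(|V| - 1)`-colouring repeats exactly one colour, necessarily
colour `1`, on two vertices `x, y`; these form a maximal independent set, and the vertices `a, b`
of colours `2, 3` lie within distance `2`, resp. `3`, of every vertex other than `x, y`.
Conversely such a frame `(x, y, a, b)` extends to a greedy colouring by colouring the remaining
vertices `4, 5, …` in any order: they are pairwise within distance `4` through `a`.

Conditions (ii)–(iv) say exactly that a frame exists. If `rad(G) = 3` the pair is at distance `3`,
`a` is the vertex `w` of (iii) and `b` any neighbour of `w` off the pair. If `rad(G) = 2`, `a` can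
be taken central and `b` is the non-diametrical vertex of (iv), or any fourth vertex when
`diam(G) ≤ 3`.
-/

namespace SimpleGraph

variable {V : Type*} {G : SimpleGraph V} {u v w x y : V}

lemma Reachable.adj_of_dist_le_one (hr : G.Reachable u v) (hne : u ≠ v) (h : G.dist u v ≤ 1) :
    G.Adj u v :=
  dist_eq_one_iff_adj.mp (le_antisymm h (hr.pos_dist_of_ne hne))

lemma Adj.dist_le_add_one (h : G.Adj v w) (u : V) : G.dist u w ≤ G.dist u v + 1 := by
  simpa [dist_eq_one_iff_adj.mpr h] using h.reachable.dist_triangle_right u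

lemma Adj.dist_le_one_add (h : G.Adj u v) (w : V) : G.dist u w ≤ 1 + G.dist v w := by
  rw [dist_comm, add_comm, dist_comm (u := v)]
  exact h.symm.dist_le_add_one w

lemma exists_adj_dist_lt (h : G.dist x y ≠ 0) : ∃ m, G.Adj x m ∧ G.dist m y < G.dist x y := by
  obtain ⟨p, hp⟩ := exists_walk_of_dist_ne_zero h
  cases p with
  | nil => simp at h
  | cons hadj q =>
    refine ⟨_, hadj, ?_⟩
    have := dist_le q
    simp only [Walk.length_cons] at hp
    omega

lemma exists_adj_adj_of_dist_eq_two (h : G.dist x y = 2) : ∃ m, G.Adj x m ∧ G.Adj m y := by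
  obtain ⟨m, hxm, hm⟩ := exists_adj_dist_lt (h ▸ two_ne_zero)
  have hmy : m ≠ y := by
    rintro rfl
    rw [dist_eq_one_iff_adj.mpr hxm] at h
    omega
  have hr : G.Reachable m y := hxm.symm.reachable.trans (Reachable.of_dist_ne_zero (by omega))
  exact ⟨m, hxm, hr.adj_of_dist_le_one hmy (by omega)⟩

end SimpleGraph

section Eccentricity

variable {V : Type*} [Fintype V] {G : SimpleGraph V}

lemma eccent_le_iff_forall_dist_le {v : V} {r : ℕ} :
    _root_.eccent G v ≤ r ↔ ∀ u, G.dist v u ≤ r := by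
  simp [_root_.eccent]

lemma dist_le_eccent (v u : V) : G.dist v u ≤ _root_.eccent G v :=
  eccent_le_iff_forall_dist_le.mp le_rfl u

lemma graphRadius_le_eccent (v : V) : graphRadius G ≤ _root_.eccent G v :=
  Nat.sInf_le ⟨v, rfl⟩

lemma exists_eccent_eq_graphRadius [Nonempty V] : ∃ v, _root_.eccent G v = graphRadius G :=
  Nat.sInf_mem (Set.range_nonempty _)

lemma graphDiam_le_iff {r : ℕ} : graphDiam G ≤ r ↔ ∀ u v, G.dist u v ≤ r := by
  simp [graphDiam, eccent_le_iff_forall_dist_le]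

lemma dist_le_graphDiam (u v : V) : G.dist u v ≤ graphDiam G :=
  graphDiam_le_iff.mp le_rfl u v

end Eccentricity

namespace SimpleGraph

variable {V : Type*} {G : SimpleGraph V} {x y : V}

lemma isMaxIndepFinset_iff [DecidableEq V] {s : Finset V} :
    IsMaxIndepFinset G s ↔ IsIndepFinset G s ∧ ∀ v ∉ s, ∃ u ∈ s, G.Adj u v := by
  refine ⟨fun ⟨hind, hmax⟩ => ⟨hind, fun v hv => ?_⟩,
    fun ⟨hind, hdom⟩ => ⟨hind, fun t ht hst => ?_⟩⟩
  · by_contra! h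
    have hins : IsIndepFinset G (insert v s) := by
      intro a ha b hb
      rw [Finset.mem_insert] at ha hb
      rcases ha with rfl | ha <;> rcases hb with rfl | hb
      · exact G.irrefl
      · exact fun hab => h b hb hab.symm
      · exact h a ha
      · exact hind a ha b hb
    exact hv (hmax _ hins (Finset.subset_insert _ _) ▸ Finset.mem_insert_self v s)
  · refine Finset.Subset.antisymm hst fun v hv => ?_
    by_contra hvs
    obtain ⟨u, hu, huv⟩ := hdom v hvs
    exact ht u (hst hu) v hv huv

lemma isMaxIndepFinset_singleton_iff [DecidableEq V] {v : V} :
    IsMaxIndepFinset G {v} ↔ G.IsUniversal v := by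
  simp [isMaxIndepFinset_iff, IsIndepFinset, SimpleGraph.IsUniversal, eq_comm]

lemma not_isMaxIndepFinset_empty [DecidableEq V] [Nonempty V] : ¬ IsMaxIndepFinset G ∅ := by
  simp [isMaxIndepFinset_iff]

structure IsIndepDominatingPair (G : SimpleGraph V) (x y : V) : Prop where
  ne : x ≠ y
  not_adj : ¬ G.Adj x y
  adj_or_adj : ∀ v, v ≠ x → v ≠ y → G.Adj x v ∨ G.Adj y v

lemma isMaxIndepFinset_pair_iff [DecidableEq V] (hxy : x ≠ y) :
    IsMaxIndepFinset G {x, y} ↔ IsIndepDominatingPair G x y := by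
  simp only [isMaxIndepFinset_iff, IsIndepFinset, Finset.mem_insert, Finset.mem_singleton]
  constructor
  · rintro ⟨hind, hdom⟩
    refine ⟨hxy, hind x (by simp) y (by simp), fun v hvx hvy => ?_⟩
    obtain ⟨u, rfl | rfl, hu⟩ := hdom v (by tauto)
    exacts [Or.inl hu, Or.inr hu]
  · rintro ⟨-, hnadj, hdom⟩
    refine ⟨?_, fun v hv => ?_⟩
    · rintro a (rfl | rfl) b (rfl | rfl)
      exacts [G.irrefl, hnadj, fun h => hnadj h.symm, G.irrefl]
    · rcases hdom v (by tauto) (by tauto) with h | h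
      exacts [⟨x, by simp, h⟩, ⟨y, by simp, h⟩]

namespace IsIndepDominatingPair

lemma symm (h : IsIndepDominatingPair G x y) : IsIndepDominatingPair G y x :=
  ⟨h.ne.symm, fun hyx => h.not_adj hyx.symm, fun v hvy hvx => (h.adj_or_adj v hvx hvy).symm⟩

lemma two_le_dist (hG : G.Connected) (h : IsIndepDominatingPair G x y) : 2 ≤ G.dist x y :=
  hG.one_lt_dist_of_ne_of_not_adj h.ne h.not_adj

lemma dist_le_three (hG : G.Connected) (h : IsIndepDominatingPair G x y) : G.dist x y ≤ 3 := by
  by_contra! hlt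
  obtain ⟨m, hxm, hm⟩ := exists_adj_dist_lt (G := G) (x := x) (y := y) (by omega)
  obtain ⟨m', hmm', hm'⟩ := exists_adj_dist_lt (G := G) (x := m) (y := y)
    (by have := hxm.dist_le_one_add y; omega)
  have hx : G.dist x y ≤ G.dist x m' + G.dist m' y := hG.dist_triangle
  have hxm' : G.dist x m' ≤ 2 := by
    have := hmm'.dist_le_add_one x
    rw [dist_eq_one_iff_adj.mpr hxm] at this
    omega
  have hm'x : m' ≠ x := by rintro rfl; omega
  have hm'y : m' ≠ y := by rintro rfl; rw [dist_self] at hx; omega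
  rcases h.adj_or_adj m' hm'x hm'y with hadj | hadj
  · have := hadj.dist_le_one_add y
    omega
  · have := dist_eq_one_iff_adj.mpr hadj.symm
    omega

lemma dist_le_add_one (h : IsIndepDominatingPair G x y) {v : V} {r : ℕ}
    (hx : G.dist v x ≤ r) (hy : G.dist v y ≤ r) (u : V) : G.dist v u ≤ r + 1 := by
  by_cases hux : u = x
  · rw [hux]; omega
  by_cases huy : u = y
  · rw [huy]; omega
  rcases h.adj_or_adj u hux huy with hadj | hadj
  · exact (hadj.dist_le_add_one v).trans (by omega)
  · exact (hadj.dist_le_add_one v).trans (by omega)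

lemma exists_forall_dist_le_two_of_dist_eq_two (h : G.IsIndepDominatingPair x y)
    (hd : G.dist x y = 2) : ∃ m, m ≠ x ∧ m ≠ y ∧ ∀ u, G.dist m u ≤ 2 := by
  obtain ⟨m, hxm, hmy⟩ := exists_adj_adj_of_dist_eq_two hd
  exact ⟨m, (G.ne_of_adj hxm).symm, G.ne_of_adj hmy,
    h.dist_le_add_one (dist_eq_one_iff_adj.mpr hxm.symm).le (dist_eq_one_iff_adj.mpr hmy).le⟩

lemma dist_le_four (hG : G.Connected) (h : G.IsIndepDominatingPair x y) (v : V) :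
    G.dist x v ≤ 4 := by
  have := h.dist_le_three hG
  by_cases hvx : v = x
  · simp [hvx]
  by_cases hvy : v = y
  · rw [hvy]
    omega
  rcases h.adj_or_adj v hvx hvy with hadj | hadj
  · rw [dist_eq_one_iff_adj.mpr hadj]
    omega
  · have := hadj.dist_le_add_one x
    omega

lemma four_le_card [Fintype V] (hG : G.Connected) (h : IsIndepDominatingPair G x y)
    (hnu : ∀ v, ¬ G.IsUniversal v) : 4 ≤ Fintype.card V := by
  classical
  have hd := h.two_le_dist hG
  obtain ⟨m, hxm, -⟩ := exists_adj_dist_lt (G := G) (x := x) (y := y) (by omega)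
  obtain ⟨m', hym', -⟩ := exists_adj_dist_lt (G := G) (x := y) (y := x)
    (by rw [dist_comm]; omega)
  have four_le {a b c d : V} (hab : a ≠ b) (hac : a ≠ c) (had : a ≠ d) (hbc : b ≠ c)
      (hbd : b ≠ d) (hcd : c ≠ d) : 4 ≤ Fintype.card V :=
    (Finset.card_le_univ {a, b, c, d}).trans' (by simp [Finset.card_insert_of_notMem, *])
  have hmy : m ≠ y := by rintro rfl; exact h.not_adj hxm
  have hm'x : m' ≠ x := by rintro rfl; exact h.not_adj hym'.symm
  by_cases hmm' : m = m'
  · subst hmm'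
    obtain ⟨t, hmt, hnadj⟩ : ∃ t, m ≠ t ∧ ¬ G.Adj m t := by
      simpa [SimpleGraph.IsUniversal] using hnu m
    have hxt : x ≠ t := by rintro rfl; exact hnadj hxm.symm
    have hyt : y ≠ t := by rintro rfl; exact hnadj hym'.symm
    exact four_le h.ne (G.ne_of_adj hxm) hxt (Ne.symm hmy) hyt hmt
  · exact four_le h.ne (G.ne_of_adj hxm) (Ne.symm hm'x) (Ne.symm hmy) (G.ne_of_adj hym') hmm'

end IsIndepDominatingPair

lemma exists_ne_ne_ne_of_four_le_card [Fintype V] (h : 4 ≤ Fintype.card V) (a b c : V) :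
    ∃ d, d ≠ a ∧ d ≠ b ∧ d ≠ c := by
  classical
  obtain ⟨d, -, hd⟩ := Finset.exists_mem_notMem_of_card_lt_card (s := {a, b, c}) (t := Finset.univ)
    (Finset.card_le_three.trans_lt (Finset.card_univ (α := V) ▸ h))
  exact ⟨d, by simpa using hd⟩

lemma indepDomNum_eq_two_iff [Fintype V] [DecidableEq V] [Nonempty V] :
    indepDomNum G = 2 ↔ (∀ v, ¬ G.IsUniversal v) ∧ ∃ x y, IsIndepDominatingPair G x y := by
  set S := {n | ∃ s : Finset V, IsMaxIndepFinset G s ∧ s.card = n}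
  constructor
  · intro h
    have hmem : indepDomNum G ∈ S := Nat.sInf_mem (Nat.nonempty_of_sInf_eq_succ h)
    refine ⟨fun v hv => ?_, ?_⟩
    · have : indepDomNum G ≤ 1 :=
        Nat.sInf_le ⟨{v}, isMaxIndepFinset_singleton_iff.mpr hv, Finset.card_singleton v⟩
      omega
    · obtain ⟨s, hs, hcard⟩ := hmem
      obtain ⟨x, y, hxy, rfl⟩ := Finset.card_eq_two.mp (hcard.trans h)
      exact ⟨x, y, (isMaxIndepFinset_pair_iff hxy).mp hs⟩
  · rintro ⟨hnu, x, y, hxy⟩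
    have h2 : 2 ∈ S := ⟨{x, y}, (isMaxIndepFinset_pair_iff hxy.ne).mpr hxy, Finset.card_pair hxy.ne⟩
    refine le_antisymm (Nat.sInf_le h2) (not_lt.mp fun hlt => ?_)
    obtain ⟨s, hs, hcard⟩ : indepDomNum G ∈ S := Nat.sInf_mem ⟨2, h2⟩
    rw [← hcard] at hlt
    interval_cases h : s.card
    · exact not_isMaxIndepFinset_empty (Finset.card_eq_zero.mp h ▸ hs)
    · obtain ⟨v, rfl⟩ := Finset.card_eq_one.mp h
      exact hnu v (isMaxIndepFinset_singleton_iff.mp hs)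

end SimpleGraph

namespace IsGreedyPackingColoring

variable {V : Type*} {G : SimpleGraph V} {k : ℕ} {c : V → ℕ}

lemma exists_color_eq (h : IsGreedyPackingColoring G k c) {j : ℕ} (h1 : 1 ≤ j) (hj : j ≤ k) :
    ∃ u, c u = j := by
  obtain ⟨-, ⟨t, ht⟩, hgr⟩ := h
  rcases hj.lt_or_eq with hlt | rfl
  · obtain ⟨u, hu, -⟩ := hgr t j h1 (ht ▸ hlt)
    exact ⟨u, hu⟩
  · exact ⟨t, ht⟩

lemma one_le (h : IsGreedyPackingColoring G k c) : 1 ≤ k := by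
  obtain ⟨t, ht⟩ := h.2.1
  exact ht ▸ (h.1.1 t).1

lemma image_univ [Fintype V] (h : IsGreedyPackingColoring G k c) :
    Finset.univ.image c = Finset.Icc 1 k := by
  ext j
  simp only [Finset.mem_image, Finset.mem_univ, true_and, Finset.mem_Icc]
  exact ⟨by rintro ⟨v, rfl⟩; exact h.1.1 v, fun ⟨h1, hj⟩ => h.exists_color_eq h1 hj⟩

lemma le_card [Fintype V] (h : IsGreedyPackingColoring G k c) : k ≤ Fintype.card V := by
  simpa [h.image_univ] using Finset.card_image_le (s := Finset.univ) (f := c)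

lemma exists_adj_color_eq_one (h : IsGreedyPackingColoring G k c) {v : V} (hv : 2 ≤ c v) :
    ∃ u, c u = 1 ∧ G.Adj u v := by
  obtain ⟨u, hu, hr, hd⟩ := h.2.2 v 1 le_rfl hv
  exact ⟨u, hu, hr.adj_of_dist_le_one (by rintro rfl; omega) hd⟩

lemma dist_le_of_forall_color_eq (h : IsGreedyPackingColoring G k c) {w v : V} {j : ℕ}
    (hj : 1 ≤ j) (hjv : j < c v) (hw : ∀ u, c u = j → u = w) : G.dist w v ≤ j := by
  obtain ⟨u, hu, -, hd⟩ := h.2.2 v j hj hjv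
  exact hw u hu ▸ hd

lemma isUniversal_of_forall_color_eq_one (h : IsGreedyPackingColoring G k c) {x : V}
    (hx : ∀ v, c v = 1 ↔ v = x) : G.IsUniversal x := by
  intro v hxv
  have hv : 2 ≤ c v := by
    have := (h.1.1 v).1
    have : c v ≠ 1 := fun hv => hxv ((hx v).mp hv).symm
    omega
  obtain ⟨u, hu, hadj⟩ := h.exists_adj_color_eq_one hv
  exact (hx u).mp hu ▸ hadj

lemma exists_isUniversal [Fintype V] (h : IsGreedyPackingColoring G (Fintype.card V) c) :
    ∃ x, G.IsUniversal x := by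
  have hinj : Function.Injective c := by
    rw [← Set.injOn_univ, ← Finset.coe_univ]
    exact Finset.injOn_of_card_image_eq (by simp [h.image_univ])
  obtain ⟨x, hx⟩ := h.exists_color_eq le_rfl h.one_le
  exact ⟨x, h.isUniversal_of_forall_color_eq_one fun v => ⟨fun hv => hinj (hv.trans hx.symm),
    fun hv => hv ▸ hx⟩⟩

end IsGreedyPackingColoring

lemma SimpleGraph.IsUniversal.exists_isGreedyPackingColoring_card {V : Type*} [Fintype V]
    [DecidableEq V] {G : SimpleGraph V} {d : V} (hd : G.IsUniversal d) :
    ∃ c, IsGreedyPackingColoring G (Fintype.card V) c := by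
  have hG := SimpleGraph.Connected.of_isUniversal hd
  set L := d :: (Finset.univ.erase d).toList
  have hnd : L.Nodup := by simp [L, Finset.nodup_toList]
  have hmem : ∀ v, v ∈ L := fun v => by by_cases hv : v = d <;> simp [L, hv]
  have hlen : L.length = Fintype.card V := by
    simp [L, Finset.card_erase_of_mem, Nat.sub_add_cancel (Fintype.card_pos_iff.mpr ⟨d⟩)]
  have hcol : ∀ i (hi : i < L.length), L.idxOf L[i] + 1 = i + 1 := fun i hi => by
    rw [hnd.idxOf_getElem]
  have hdist : ∀ v, G.dist d v ≤ 1 := fun v => by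
    by_cases hv : d = v
    · simp [hv]
    · exact (SimpleGraph.dist_eq_one_iff_adj.mpr (hd hv)).le
  refine ⟨fun v => L.idxOf v + 1, ⟨fun v => ⟨le_add_self, ?_⟩, ?_⟩, ?_, ?_⟩
  · exact hlen ▸ List.idxOf_lt_length_of_mem (hmem v)
  · intro u v huv heq _
    dsimp only at heq
    exact absurd ((List.idxOf_inj (hmem u)).mp (by omega)) huv
  · exact ⟨L[L.length - 1]'(by simp [L]), by
    dsimp only
    rw [hcol, ← hlen]
    simp [L]⟩
  · intro v j hj hjv
    dsimp only at hjv ⊢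
    have hjL : j - 1 < L.length := by
      have := List.idxOf_lt_length_of_mem (hmem v)
      omega
    refine ⟨L[j - 1], by rw [hcol]; omega, hG _ _, ?_⟩
    rcases hj.eq_or_lt with rfl | hj
    · exact hdist v
    · calc G.dist L[j - 1] v ≤ G.dist L[j - 1] d + G.dist d v := hG.dist_triangle
        _ ≤ j := by
          have := hdist v
          have : G.dist L[j - 1] d ≤ 1 := SimpleGraph.dist_comm (G := G) ▸ hdist _
          omega

namespace SimpleGraph

variable {V : Type*} {G : SimpleGraph V} {x y a b u v : V}

/-- The vertices coloured `1, 1, 2, 3` by a greedy packing `(|V| - 1)`-colouring. -/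
structure IsGreedyFrame (G : SimpleGraph V) (x y a b : V) : Prop where
  pair : G.IsIndepDominatingPair x y
  a_ne_x : a ≠ x
  a_ne_y : a ≠ y
  b_ne_x : b ≠ x
  b_ne_y : b ≠ y
  b_ne_a : b ≠ a
  dist_a_le : ∀ u, u ≠ x → u ≠ y → G.dist a u ≤ 2
  dist_b_le : ∀ u, u ≠ x → u ≠ y → G.dist b u ≤ 3

section FrameColoring

variable [Fintype V] [DecidableEq V]

noncomputable def frameOrder (x y a b : V) : List V :=
  x :: a :: b :: (Finset.univ \ {x, y, a, b}).toList

noncomputable def frameColoring (x y a b : V) (v : V) : ℕ :=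
  if v = y then 1 else (frameOrder x y a b).idxOf v + 1

lemma mem_frameOrder_iff (hxy : x ≠ y) (hay : a ≠ y) (hby : b ≠ y) :
    v ∈ frameOrder x y a b ↔ v ≠ y := by
  simp only [frameOrder, List.mem_cons, Finset.mem_toList, Finset.mem_sdiff, Finset.mem_univ,
    Finset.mem_insert, Finset.mem_singleton, true_and]
  grind

lemma nodup_frameOrder (hax : a ≠ x) (hbx : b ≠ x) (hba : b ≠ a) :
    (frameOrder x y a b).Nodup := by
  simp [frameOrder, Finset.nodup_toList, hax.symm, hbx.symm, hba.symm]

lemma frameColoring_of_ne (hv : v ≠ y) :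
    frameColoring x y a b v = (frameOrder x y a b).idxOf v + 1 := if_neg hv

lemma frameColoring_y : frameColoring x y a b y = 1 := if_pos rfl

namespace IsGreedyFrame

lemma mem_frameOrder_iff (hf : G.IsGreedyFrame x y a b) : v ∈ frameOrder x y a b ↔ v ≠ y :=
  SimpleGraph.mem_frameOrder_iff hf.pair.ne hf.a_ne_y hf.b_ne_y

lemma length_frameOrder (hf : G.IsGreedyFrame x y a b) :
    (frameOrder x y a b).length = Fintype.card V - 1 := by
  rw [← List.toFinset_card_of_nodup (nodup_frameOrder hf.a_ne_x hf.b_ne_x hf.b_ne_a),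
    show (frameOrder x y a b).toFinset = Finset.univ.erase y by ext v; simp [hf.mem_frameOrder_iff]]
  simp [Finset.card_erase_of_mem]

lemma frameColoring_getElem (hf : G.IsGreedyFrame x y a b) (i : ℕ)
    (hi : i < (frameOrder x y a b).length) :
    frameColoring x y a b (frameOrder x y a b)[i] = i + 1 := by
  rw [frameColoring_of_ne (hf.mem_frameOrder_iff.mp (List.getElem_mem hi)),
    (nodup_frameOrder hf.a_ne_x hf.b_ne_x hf.b_ne_a).idxOf_getElem]

lemma frameColoring_inj (hf : G.IsGreedyFrame x y a b) (hu : u ≠ y) (hv : v ≠ y)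
    (huv : frameColoring x y a b u = frameColoring x y a b v) : u = v := by
  rw [frameColoring_of_ne hu, frameColoring_of_ne hv] at huv
  exact (List.idxOf_inj (hf.mem_frameOrder_iff.mpr hu)).mp (by omega)

lemma frameColoring_le (hf : G.IsGreedyFrame x y a b) (v : V) :
    frameColoring x y a b v ≤ Fintype.card V - 1 := by
  have h3 : 3 ≤ (frameOrder x y a b).length := by simp [frameOrder]
  rw [← hf.length_frameOrder]
  by_cases hvy : v = y
  · rw [hvy, frameColoring_y]
    omega
  · rw [frameColoring_of_ne hvy]
    exact List.idxOf_lt_length_of_mem (hf.mem_frameOrder_iff.mpr hvy)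

lemma frameColoring_x (hf : G.IsGreedyFrame x y a b) : frameColoring x y a b x = 1 :=
  hf.frameColoring_getElem 0 (by simp [frameOrder])

lemma frameColoring_a (hf : G.IsGreedyFrame x y a b) : frameColoring x y a b a = 2 :=
  hf.frameColoring_getElem 1 (by simp [frameOrder])

lemma frameColoring_b (hf : G.IsGreedyFrame x y a b) : frameColoring x y a b b = 3 :=
  hf.frameColoring_getElem 2 (by simp [frameOrder])

lemma mem_pair_of_frameColoring_eq_one (hf : G.IsGreedyFrame x y a b)
    (hv : frameColoring x y a b v = 1) : v = x ∨ v = y := by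
  by_contra! h
  exact h.1 (hf.frameColoring_inj h.2 hf.pair.ne (hv.trans hf.frameColoring_x.symm))

lemma isPackingColoring (hG : G.Connected) (hf : G.IsGreedyFrame x y a b) :
    IsPackingColoring G (Fintype.card V - 1) (frameColoring x y a b) := by
  refine ⟨fun v => ⟨?_, hf.frameColoring_le v⟩, fun u v huv heq _ => ?_⟩
  · by_cases hvy : v = y
    · rw [hvy, frameColoring_y]
    · rw [frameColoring_of_ne hvy]
      omega
  have hu1 : frameColoring x y a b u = 1 := by
    by_contra hne
    have huy : u ≠ y := fun h => hne (h ▸ frameColoring_y)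
    have hvy : v ≠ y := fun h => hne (heq.trans (h ▸ frameColoring_y))
    exact huv (hf.frameColoring_inj huy hvy heq)
  have hxy := hf.pair.two_le_dist hG
  have hyx : 2 ≤ G.dist y x := dist_comm (G := G) ▸ hxy
  rw [hu1]
  rcases hf.mem_pair_of_frameColoring_eq_one hu1 with rfl | rfl <;>
    rcases hf.mem_pair_of_frameColoring_eq_one (heq ▸ hu1) with rfl | rfl <;>
    first | exact absurd rfl huv | omega

lemma exists_frameColoring_eq (hf : G.IsGreedyFrame x y a b) {j : ℕ} (hj1 : 1 ≤ j)
    (hj : j ≤ Fintype.card V - 1) : ∃ u, u ≠ y ∧ frameColoring x y a b u = j := by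
  rw [← hf.length_frameOrder] at hj
  exact ⟨_, hf.mem_frameOrder_iff.mp (List.getElem_mem (by omega : j - 1 < _)),
    (hf.frameColoring_getElem (j - 1) (by omega)).trans (by omega)⟩

lemma isGreedyPackingColoring (hG : G.Connected) (hf : G.IsGreedyFrame x y a b) :
    IsGreedyPackingColoring G (Fintype.card V - 1) (frameColoring x y a b) := by
  have h3 : 3 ≤ Fintype.card V - 1 := hf.length_frameOrder ▸ by simp [frameOrder]
  obtain ⟨w, -, hw⟩ := hf.exists_frameColoring_eq (by omega) le_rfl
  refine ⟨hf.isPackingColoring hG, ⟨w, hw⟩, fun v j hj hjv => ?_⟩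
  have hvx : v ≠ x := fun h => by rw [h, hf.frameColoring_x] at hjv; omega
  have hvy : v ≠ y := fun h => by rw [h, frameColoring_y] at hjv; omega
  rcases (by omega : j = 1 ∨ j = 2 ∨ j = 3 ∨ 4 ≤ j) with rfl | rfl | rfl | hj4
  · rcases hf.pair.adj_or_adj v hvx hvy with h | h
    · exact ⟨x, hf.frameColoring_x, h.reachable, (dist_eq_one_iff_adj.mpr h).le⟩
    · exact ⟨y, frameColoring_y, h.reachable, (dist_eq_one_iff_adj.mpr h).le⟩
  · exact ⟨a, hf.frameColoring_a, hG a v, hf.dist_a_le v hvx hvy⟩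
  · exact ⟨b, hf.frameColoring_b, hG b v, hf.dist_b_le v hvx hvy⟩
  obtain ⟨u, huy, hu⟩ := hf.exists_frameColoring_eq hj (hjv.le.trans (hf.frameColoring_le v))
  have hux : u ≠ x := fun h => by rw [h, hf.frameColoring_x] at hu; omega
  refine ⟨u, hu, hG u v, ?_⟩
  calc G.dist u v ≤ G.dist u a + G.dist a v := hG.dist_triangle
    _ ≤ j := by
      have := hf.dist_a_le v hvx hvy
      have : G.dist u a ≤ 2 := dist_comm (G := G) ▸ hf.dist_a_le u hux huy
      omega

end IsGreedyFrame

end FrameColoring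

end SimpleGraph

namespace IsGreedyPackingColoring

variable {V : Type*} [Fintype V] {G : SimpleGraph V} {c : V → ℕ}

lemma exists_pair_color_eq_one (hnu : ∀ v, ¬ G.IsUniversal v)
    (h : IsGreedyPackingColoring G (Fintype.card V - 1) c) :
    ∃ x y, x ≠ y ∧ c x = 1 ∧ c y = 1 ∧ ∀ u v, u ≠ y → v ≠ y → c u = c v → u = v := by
  classical
  obtain ⟨x, hx⟩ := h.exists_color_eq le_rfl h.one_le
  obtain ⟨y, hyx, hy⟩ : ∃ y, y ≠ x ∧ c y = 1 := by
    by_contra! hcon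
    exact hnu x (h.isUniversal_of_forall_color_eq_one fun v =>
      ⟨fun hv => by_contra fun hvx => hcon v hvx hv, fun hv => hv ▸ hx⟩)
  refine ⟨x, y, hyx.symm, hx, hy, fun u v hu hv huv => ?_⟩
  -- `y` repeats the colour of `x`, so the `|V| - 1` colours are taken bijectively off `y`.
  have himage : (Finset.univ.erase y).image c = Finset.univ.image c := by
    refine (Finset.image_subset_image (Finset.erase_subset _ _)).antisymm fun j hj => ?_
    obtain ⟨w, -, rfl⟩ := Finset.mem_image.mp hj
    by_cases hwy : w = y
    · exact Finset.mem_image.mpr ⟨x, by simp [hyx.symm], by rw [hwy, hx, hy]⟩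
    · exact Finset.mem_image_of_mem c (by simp [hwy])
  have hcard : ((Finset.univ.erase y).image c).card = (Finset.univ.erase y).card := by
    rw [himage, h.image_univ]
    simp [Finset.card_erase_of_mem]
  exact Finset.injOn_of_card_image_eq hcard (by simpa) (by simpa) huv

lemma exists_isGreedyFrame (hG : G.Connected) (hnu : ∀ v, ¬ G.IsUniversal v)
    (h : IsGreedyPackingColoring G (Fintype.card V - 1) c) :
    ∃ x y a b, G.IsGreedyFrame x y a b := by
  obtain ⟨x, y, hxy, hx, hy, hinj⟩ := h.exists_pair_color_eq_one hnu
  have huniq : ∀ {w v : V} {j : ℕ}, 2 ≤ j → c w = j → c v = j → v = w :=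
    fun hj hw hv => hinj _ _ (fun h => by rw [h, hy] at hv; omega)
      (fun h => by rw [h, hy] at hw; omega) (hv.trans hw.symm)
  have hcv : ∀ v, v ≠ x → v ≠ y → 2 ≤ c v := fun v hvx hvy => by
    have := (h.1.1 v).1
    have : c v ≠ 1 := fun hv => hvx (hinj v x hvy hxy (hv.trans hx.symm))
    omega
  have hpair : G.IsIndepDominatingPair x y := by
    refine ⟨hxy, fun hadj => ?_, fun v hvx hvy => ?_⟩
    · have := h.1.2 x y hxy (hx.trans hy.symm) hadj.reachable
      rw [SimpleGraph.dist_eq_one_iff_adj.mpr hadj] at this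
      omega
    · obtain ⟨u, hu, hadj⟩ := h.exists_adj_color_eq_one (hcv v hvx hvy)
      by_cases huy : u = y
      · exact Or.inr (huy ▸ hadj)
      · exact Or.inl (hinj u x huy hxy (hu.trans hx.symm) ▸ hadj)
  have hn := hpair.four_le_card hG hnu
  obtain ⟨a, ha⟩ := h.exists_color_eq (j := 2) (by omega) (by omega)
  obtain ⟨b, hb⟩ := h.exists_color_eq (j := 3) (by omega) (by omega)
  have hne : ∀ {w v : V}, c w ≠ c v → w ≠ v := fun h e => h (e ▸ rfl)
  have hda : ∀ u, u ≠ x → u ≠ y → G.dist a u ≤ 2 := fun u hux huy => by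
    rcases (hcv u hux huy).eq_or_lt with h2 | h2
    · rw [huniq le_rfl ha h2.symm, SimpleGraph.dist_self]
      omega
    · exact h.dist_le_of_forall_color_eq (by omega) h2 fun w hw => huniq le_rfl ha hw
  refine ⟨x, y, a, b, hpair, hne (by omega), hne (by omega), hne (by omega), hne (by omega),
    hne (by omega), hda, fun u hux huy => ?_⟩
  rcases (by have := hcv u hux huy; omega : c u = 2 ∨ c u = 3 ∨ 3 < c u) with h2 | h3 | h3
  · rw [huniq le_rfl ha h2, SimpleGraph.dist_comm]
    have := hda b (hne (by omega)) (hne (by omega))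
    omega
  · rw [huniq (by omega) hb h3, SimpleGraph.dist_self]
    omega
  · exact h.dist_le_of_forall_color_eq (by omega) h3 fun w hw => huniq (by omega) hb hw

end IsGreedyPackingColoring

section GrundyNumber

variable {V : Type*} [Fintype V] {G : SimpleGraph V}

lemma bddAbove_greedyPackingColorings :
    BddAbove {k | ∃ c : V → ℕ, IsGreedyPackingColoring G k c} :=
  ⟨Fintype.card V, fun _ ⟨_, hc⟩ => hc.le_card⟩

lemma grundyPackingChromaticNumber_of_isUniversal [DecidableEq V] {d : V}
    (hd : G.IsUniversal d) : grundyPackingChromaticNumber G = Fintype.card V :=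
  le_antisymm (csSup_le ⟨_, hd.exists_isGreedyPackingColoring_card⟩ fun _ ⟨_, hc⟩ => hc.le_card)
    (le_csSup bddAbove_greedyPackingColorings hd.exists_isGreedyPackingColoring_card)

lemma grundyPackingChromaticNumber_eq_card_sub_one_iff_exists_isGreedyFrame [DecidableEq V]
    (hG : G.Connected) (hnu : ∀ v, ¬ G.IsUniversal v) :
    grundyPackingChromaticNumber G = Fintype.card V - 1 ↔ ∃ x y a b, G.IsGreedyFrame x y a b := by
  set S := {k | ∃ c : V → ℕ, IsGreedyPackingColoring G k c}
  have hS : ∀ k ∈ S, k ≤ Fintype.card V - 1 := by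
    rintro k ⟨c, hc⟩
    have := hc.le_card
    have : k ≠ Fintype.card V := by
      rintro rfl
      obtain ⟨d, hd⟩ := hc.exists_isUniversal
      exact hnu d hd
    omega
  constructor
  · intro h
    change sSup S = _ at h
    have hne : S.Nonempty := by
      obtain ⟨v⟩ := hG.nonempty
      obtain ⟨w, hvw, -⟩ : ∃ w, v ≠ w ∧ ¬ G.Adj v w := by
        simpa [SimpleGraph.IsUniversal] using hnu v
      have := Fintype.one_lt_card_iff.mpr ⟨v, w, hvw⟩
      refine S.eq_empty_or_nonempty.resolve_left fun hS => ?_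
      rw [hS, csSup_empty, Nat.bot_eq_zero] at h
      omega
    obtain ⟨c, hc⟩ : Fintype.card V - 1 ∈ S := h ▸ Nat.sSup_mem hne bddAbove_greedyPackingColorings
    exact hc.exists_isGreedyFrame hG hnu
  · rintro ⟨x, y, a, b, hf⟩
    have hmem : Fintype.card V - 1 ∈ S := ⟨_, hf.isGreedyPackingColoring hG⟩
    exact le_antisymm (csSup_le ⟨_, hmem⟩ hS) (le_csSup bddAbove_greedyPackingColorings hmem)

end GrundyNumber

namespace SimpleGraph

variable {V : Type*} {G : SimpleGraph V} {x y a w : V}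

lemma exists_adj_ne_ne_of_dist_eq_three (hG : G.Connected) (hxy : G.dist x y = 3)
    (ha : ∀ u, u ≠ x → u ≠ y → G.dist a u ≤ 2) : ∃ t, G.Adj a t ∧ t ≠ x ∧ t ≠ y := by
  wlog hay : ¬ G.Adj a y generalizing x y
  · have hax : ¬ G.Adj a x := fun hax => by
      have := (not_not.mp hay).dist_le_add_one x
      have : G.dist x a = 1 := dist_eq_one_iff_adj.mpr hax.symm
      omega
    obtain ⟨t, hat, hty, htx⟩ := this (dist_comm.trans hxy) (fun u hy hx => ha u hx hy) hax
    exact ⟨t, hat, htx, hty⟩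
  obtain ⟨z, hyz, -⟩ := exists_adj_dist_lt (G := G) (x := y) (y := x) (by rw [dist_comm]; omega)
  have hzx : z ≠ x := by
    rintro rfl
    rw [dist_comm, dist_eq_one_iff_adj.mpr hyz] at hxy
    omega
  have hza : z ≠ a := by rintro rfl; exact hay hyz.symm
  have := ha z hzx (G.ne_of_adj hyz).symm
  have := hG.pos_dist_of_ne hza.symm
  rcases (by omega : G.dist a z = 1 ∨ G.dist a z = 2) with h1 | h2
  · exact ⟨z, dist_eq_one_iff_adj.mp h1, hzx, (G.ne_of_adj hyz).symm⟩
  · obtain ⟨s, has, hsz⟩ := exists_adj_adj_of_dist_eq_two h2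
    refine ⟨s, has, ?_, fun hsy => hay (hsy ▸ has)⟩
    rintro rfl
    have := hyz.symm.dist_le_add_one s
    rw [dist_eq_one_iff_adj.mpr hsz] at this
    omega

lemma IsIndepDominatingPair.exists_isGreedyFrame_of_dist_eq_three (hG : G.Connected)
    (hp : G.IsIndepDominatingPair x y) (hd : G.dist x y = 3) (hxw : G.Adj x w)
    (hw : ∀ z, G.Adj y z → G.dist w z ≤ 2) :
    ∃ b, G.IsGreedyFrame x y w b := by
  have hwu : ∀ u, u ≠ x → u ≠ y → G.dist w u ≤ 2 := fun u hux huy => by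
    rcases hp.adj_or_adj u hux huy with hxu | hyu
    · have := hxu.dist_le_add_one w
      rwa [dist_eq_one_iff_adj.mpr hxw.symm] at this
    · exact hw u hyu
  obtain ⟨t, hwt, htx, hty⟩ := exists_adj_ne_ne_of_dist_eq_three hG hd hwu
  refine ⟨t, hp, (G.ne_of_adj hxw).symm, fun hwy => hp.not_adj (hwy ▸ hxw), htx, hty,
    (G.ne_of_adj hwt).symm, hwu, fun u hux huy => ?_⟩
  have := hwt.symm.dist_le_one_add u
  have := hwu u hux huy
  omega

section Radius

variable [Fintype V]

lemma two_le_graphRadius [Nonempty V] (hG : G.Connected) (hnu : ∀ v, ¬ G.IsUniversal v) :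
    2 ≤ graphRadius G := by
  obtain ⟨v, hv⟩ := exists_eccent_eq_graphRadius (G := G)
  by_contra! hlt
  exact hnu v fun u hvu => (hG v u).adj_of_dist_le_one hvu ((dist_le_eccent v u).trans (by omega))

namespace IsIndepDominatingPair

lemma graphRadius_le_three (hG : G.Connected) (h : G.IsIndepDominatingPair x y) :
    graphRadius G ≤ 3 := by
  have := h.dist_le_three hG
  obtain ⟨m, hxm, hm⟩ := exists_adj_dist_lt (G := G) (x := x) (y := y)
    (by have := h.two_le_dist hG; omega)
  have hmx : G.dist m x ≤ 2 := by
    rw [dist_comm, dist_eq_one_iff_adj.mpr hxm]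
    omega
  exact (graphRadius_le_eccent m).trans
    (eccent_le_iff_forall_dist_le.mpr (h.dist_le_add_one hmx (by omega)))

lemma dist_eq_three (hG : G.Connected) (h : G.IsIndepDominatingPair x y)
    (hrad : 3 ≤ graphRadius G) : G.dist x y = 3 := by
  have := h.two_le_dist hG
  have := h.dist_le_three hG
  by_contra hne
  obtain ⟨m, -, -, hm⟩ := h.exists_forall_dist_le_two_of_dist_eq_two (by omega)
  have := (graphRadius_le_eccent m).trans (eccent_le_iff_forall_dist_le.mpr hm)
  omega

lemma exists_forall_dist_le_two (hG : G.Connected) (h : G.IsIndepDominatingPair x y)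
    (hrad : graphRadius G = 2) : ∃ a, a ≠ x ∧ a ≠ y ∧ ∀ u, G.dist a u ≤ 2 := by
  have := h.two_le_dist hG
  have := h.dist_le_three hG
  rcases (by omega : G.dist x y = 2 ∨ G.dist x y = 3) with hd | hd
  · exact h.exists_forall_dist_le_two_of_dist_eq_two hd
  have := hG.nonempty
  obtain ⟨m, hm⟩ := exists_eccent_eq_graphRadius (G := G)
  have hm2 : ∀ u, G.dist m u ≤ 2 := eccent_le_iff_forall_dist_le.mp (hm.trans hrad).le
  refine ⟨m, ?_, ?_, hm2⟩
  · rintro rfl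
    have := hm2 y
    omega
  · rintro rfl
    have := hm2 x
    rw [dist_comm] at this
    omega

lemma eccent_le_three (h : G.IsIndepDominatingPair x y) (hd : G.dist x y = 2) {v : V}
    (hvx : v ≠ x) (hvy : v ≠ y) (hv : ∀ u, u ≠ x → u ≠ y → G.dist v u ≤ 3) :
    _root_.eccent G v ≤ 3 := by
  have hyx : G.dist y x = 2 := dist_comm.trans hd
  have hpair : G.dist v x ≤ 3 ∧ G.dist v y ≤ 3 := by
    rcases h.adj_or_adj v hvx hvy with hadj | hadj
    · have := hadj.symm.dist_le_one_add y
      rw [dist_comm, dist_eq_one_iff_adj.mpr hadj]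
      omega
    · have := hadj.symm.dist_le_one_add x
      rw [dist_comm (u := v) (v := y), dist_eq_one_iff_adj.mpr hadj]
      omega
  refine eccent_le_iff_forall_dist_le.mpr fun u => ?_
  by_cases hux : u = x
  · exact hux ▸ hpair.1
  by_cases huy : u = y
  · exact huy ▸ hpair.2
  exact hv u hux huy

end IsIndepDominatingPair

end Radius

end SimpleGraph

namespace SimpleGraph

variable {V : Type*} [Fintype V] {G : SimpleGraph V} {x y a b w : V}

namespace IsGreedyFrame

lemma graphDiam_le_four (hG : G.Connected) (hf : G.IsGreedyFrame x y a b) : graphDiam G ≤ 4 := by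
  have hpair : ∀ u v, u = x ∨ u = y → G.dist u v ≤ 4 := by
    rintro u v (rfl | rfl)
    exacts [hf.pair.dist_le_four hG v, hf.pair.symm.dist_le_four hG v]
  refine graphDiam_le_iff.mpr fun u v => ?_
  by_cases hu : u = x ∨ u = y
  · exact hpair u v hu
  by_cases hv : v = x ∨ v = y
  · exact dist_comm (G := G) ▸ hpair v u hv
  rw [not_or] at hu hv
  have hau := hf.dist_a_le u hu.1 hu.2
  have hav := hf.dist_a_le v hv.1 hv.2
  calc G.dist u v ≤ G.dist u a + G.dist a v := hG.dist_triangle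
    _ ≤ 4 := by rw [dist_comm]; omega

lemma exists_of_graphRadius_eq_three [DecidableEq V] (hG : G.Connected)
    (hf : G.IsGreedyFrame x y a b) (hrad : graphRadius G = 3) :
    ∃ x y : V, x ≠ y ∧ IsMaxIndepFinset G {x, y} ∧ G.dist x y = 3 ∧
      ∃ w : V, G.Adj x w ∧ ∀ z : V, G.Adj y z → G.dist w z ≤ 2 := by
  have witness : ∀ {x y : V}, G.IsIndepDominatingPair x y → G.Adj x a →
      (∀ u, u ≠ x → u ≠ y → G.dist a u ≤ 2) →
      ∃ w : V, G.Adj x w ∧ ∀ z : V, G.Adj y z → G.dist w z ≤ 2 :=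
    fun hp hxa ha => ⟨a, hxa, fun z hyz =>
      ha z (fun hzx => hp.not_adj (hzx ▸ hyz).symm) (G.ne_of_adj hyz).symm⟩
  have hd := hf.pair.dist_eq_three hG hrad.ge
  rcases hf.pair.adj_or_adj a hf.a_ne_x hf.a_ne_y with hxa | hya
  · exact ⟨x, y, hf.pair.ne, (isMaxIndepFinset_pair_iff hf.pair.ne).mpr hf.pair, hd,
      witness hf.pair hxa hf.dist_a_le⟩
  · exact ⟨y, x, hf.pair.symm.ne, (isMaxIndepFinset_pair_iff hf.pair.symm.ne).mpr hf.pair.symm,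
      dist_comm.trans hd, witness hf.pair.symm hya fun u huy hux => hf.dist_a_le u hux huy⟩

lemma exists_of_graphRadius_eq_two [DecidableEq V] (hG : G.Connected)
    (hf : G.IsGreedyFrame x y a b) (hrad : graphRadius G = 2) :
    ∃ A : Finset V, IsMaxIndepFinset G A ∧ A.card = 2 ∧
      ∃ w z : V, w ≠ z ∧ w ∉ A ∧ z ∉ A ∧ _root_.eccent G w = 2 ∧ _root_.eccent G z ≤ 3 := by
  obtain ⟨w, hwx, hwy, hw⟩ := hf.pair.exists_forall_dist_le_two hG hrad
  suffices ∃ z, w ≠ z ∧ z ≠ x ∧ z ≠ y ∧ _root_.eccent G z ≤ 3 by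
    obtain ⟨z, hwz, hzx, hzy, hz⟩ := this
    exact ⟨{x, y}, (isMaxIndepFinset_pair_iff hf.pair.ne).mpr hf.pair,
      Finset.card_pair hf.pair.ne, w, z, hwz, by simp [hwx, hwy], by simp [hzx, hzy],
      le_antisymm (eccent_le_iff_forall_dist_le.mpr hw) (hrad ▸ graphRadius_le_eccent w), hz⟩
  have := hf.pair.two_le_dist hG
  have := hf.pair.dist_le_three hG
  rcases (by omega : G.dist x y = 2 ∨ G.dist x y = 3) with hd | hd
  · by_cases hwa : w = a
    · exact ⟨b, hwa ▸ hf.b_ne_a.symm, hf.b_ne_x, hf.b_ne_y,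
        hf.pair.eccent_le_three hd hf.b_ne_x hf.b_ne_y hf.dist_b_le⟩
    · exact ⟨a, hwa, hf.a_ne_x, hf.a_ne_y, hf.pair.eccent_le_three hd hf.a_ne_x hf.a_ne_y
        fun u hux huy => (hf.dist_a_le u hux huy).trans (by norm_num)⟩
  · obtain ⟨t, hwt, htx, hty⟩ := exists_adj_ne_ne_of_dist_eq_three hG hd fun u _ _ => hw u
    refine ⟨t, G.ne_of_adj hwt, htx, hty, eccent_le_iff_forall_dist_le.mpr fun u => ?_⟩
    have := hwt.symm.dist_le_one_add u
    have := hw u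
    omega

end IsGreedyFrame

namespace IsIndepDominatingPair

lemma exists_isGreedyFrame [DecidableEq V] {x₀ y₀ : V} (hG : G.Connected)
    (hnu : ∀ v, ¬ G.IsUniversal v) (hp : G.IsIndepDominatingPair x₀ y₀)
    (hdiam : graphDiam G ≤ 4)
    (hiii : graphRadius G = 3 →
      ∃ x y : V, x ≠ y ∧ IsMaxIndepFinset G {x, y} ∧ G.dist x y = 3 ∧
        ∃ w : V, G.Adj x w ∧ ∀ z : V, G.Adj y z → G.dist w z ≤ 2)
    (hiv : graphRadius G = 2 ∧ graphDiam G = 4 →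
      ∃ A : Finset V, IsMaxIndepFinset G A ∧ A.card = 2 ∧
        ∃ w z : V, w ≠ z ∧ w ∉ A ∧ z ∉ A ∧ _root_.eccent G w = 2 ∧ _root_.eccent G z ≤ 3) :
    ∃ x y a b, G.IsGreedyFrame x y a b := by
  have := hG.nonempty
  have := two_le_graphRadius hG hnu
  have := hp.graphRadius_le_three hG
  rcases (by omega : graphRadius G = 2 ∨ graphRadius G = 3) with hrad | hrad
  · by_cases hd4 : graphDiam G = 4
    · obtain ⟨A, hA, hcard, w, z, hwz, hwA, hzA, hw, hz⟩ := hiv ⟨hrad, hd4⟩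
      obtain ⟨x, y, hxy, rfl⟩ := Finset.card_eq_two.mp hcard
      simp only [Finset.mem_insert, Finset.mem_singleton, not_or] at hwA hzA
      exact ⟨x, y, w, z, (isMaxIndepFinset_pair_iff hxy).mp hA, hwA.1, hwA.2, hzA.1, hzA.2,
        hwz.symm, fun u _ _ => hw ▸ dist_le_eccent w u,
        fun u _ _ => (dist_le_eccent z u).trans hz⟩
    · obtain ⟨a, hax, hay, ha⟩ := hp.exists_forall_dist_le_two hG hrad
      obtain ⟨b, hbx, hby, hba⟩ := exists_ne_ne_ne_of_four_le_card (hp.four_le_card hG hnu) x₀ y₀ a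
      exact ⟨x₀, y₀, a, b, hp, hax, hay, hbx, hby, hba, fun u _ _ => ha u,
        fun u _ _ => (dist_le_graphDiam b u).trans (by omega)⟩
  · obtain ⟨x, y, hxy, hmax, hd, w, hxw, hw⟩ := hiii hrad
    obtain ⟨b, hb⟩ :=
      ((isMaxIndepFinset_pair_iff hxy).mp hmax).exists_isGreedyFrame_of_dist_eq_three hG hd hxw hw
    exact ⟨x, y, w, b, hb⟩

end IsIndepDominatingPair

end SimpleGraph

/-- A connected graph `G` on `n` vertices has `Γρ(G) = n - 1` iff
(i) `i(G) = 2`; (ii) `diam(G) ≤ 4`; (iii) if `rad(G) = 3` then there exist a maximal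
independent set `{x,y}` with `d(x,y) = 3` and `w ∈ N(x)` with `d(w,z) ≤ 2` for all
`z ∈ N(y)`; (iv) if `rad(G) = 2` and `diam(G) = 4` then there exist a maximal independent
set `A` of cardinality 2 and distinct `w, z ∉ A` with `ecc(w) = 2` and `ecc(z) ≤ 3`. -/
theorem grundyPackingChromaticNumber_eq_card_sub_one_iff {V : Type*} [Fintype V]
    [DecidableEq V] (G : SimpleGraph V) (hG : G.Connected) :
    grundyPackingChromaticNumber G = Fintype.card V - 1 ↔
    (indepDomNum G = 2 ∧
     graphDiam G ≤ 4 ∧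
     (graphRadius G = 3 →
        ∃ x y : V, x ≠ y ∧ IsMaxIndepFinset G {x, y} ∧ G.dist x y = 3 ∧
          ∃ w : V, G.Adj x w ∧ ∀ z : V, G.Adj y z → G.dist w z ≤ 2) ∧
     (graphRadius G = 2 ∧ graphDiam G = 4 →
        ∃ A : Finset V, IsMaxIndepFinset G A ∧ A.card = 2 ∧
          ∃ w z : V, w ≠ z ∧ w ∉ A ∧ z ∉ A ∧ _root_.eccent G w = 2 ∧ _root_.eccent G z ≤ 3)) := by
  have := hG.nonempty
  by_cases hu : ∃ d, G.IsUniversal d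
  · obtain ⟨d, hd⟩ := hu
    rw [grundyPackingChromaticNumber_of_isUniversal hd]
    have := Fintype.card_pos (α := V)
    exact iff_of_false (by omega) fun h => (indepDomNum_eq_two_iff.mp h.1).1 d hd
  simp only [not_exists] at hu
  rw [grundyPackingChromaticNumber_eq_card_sub_one_iff_exists_isGreedyFrame hG hu,
    indepDomNum_eq_two_iff]
  constructor
  · rintro ⟨x, y, a, b, hf⟩
    exact ⟨⟨hu, x, y, hf.pair⟩, hf.graphDiam_le_four hG, hf.exists_of_graphRadius_eq_three hG,
      fun h => hf.exists_of_graphRadius_eq_two hG h.1⟩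
  · rintro ⟨⟨-, x, y, hp⟩, hdiam, hiii, hiv⟩
    exact hp.exists_isGreedyFrame hG hu hdiam hiii hiv
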